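/- (Stability of tilted expectations in the prior parameter.) Let ν be a nonzero finite measure on [−1,1], Θ ⊆ ℝ^k, and ℓ : Θ × [−1,1] → ℝ a measurable function satisfying |ℓ(θ; b) − ℓ(θ'; b)| ≤ L‖θ − θ'‖ for all b ∈ [−1,1] and θ, θ' ∈ Θ. For t ∈ ℝ, d ≥ 0 and θ ∈ Θ, let μ_{t,θ} be the probability measure on [−1,1] with density proportional to b ↦ exp(t·b − d·b²/2 + ℓ(θ; b)) with respect to ν. Then for every measurable h : [−1,1] → [−1,1] and all θ, θ' ∈ Θ, |∫ h dμ_{t,θ} − ∫ h dμ_{t,θ'}| ≤ 2 e^{Lδ}(e^{Lδ} − 1), where δ := ‖θ − θ'‖; in particular the difference is at most C(L)·‖θ − θ'‖ whenever ‖θ − θ'‖ ≤ 1, with C(L) depending only on L. -/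

import Mathlib

open MeasureTheory ProbabilityTheory Real Filter

noncomputable section

/-- The tilted probability measure on `[−1,1]` with density (w.r.t. `ν`) proportional to
`b ↦ exp (t·b − d·b²/2 + ℓ θ b)`. -/
def tiltPrior {k : ℕ} (ν : Measure ℝ) (ℓ : EuclideanSpace ℝ (Fin k) → ℝ → ℝ)
    (t d : ℝ) (θ : EuclideanSpace ℝ (Fin k)) : Measure ℝ :=
  ((ν.withDensity fun b => ENNReal.ofReal (Real.exp (t * b - d * b ^ 2 / 2 + ℓ θ b)))
      Set.univ)⁻¹ •
    ν.withDensity fun b => ENNReal.ofReal (Real.exp (t * b - d * b ^ 2 / 2 + ℓ θ b))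

/-! If `|ℓ θ b - ℓ θ' b| ≤ L δ`, the unnormalized tilted measures dominate each other with
constant `c = e^{Lδ}`, hence the normalized ones with constant `c²`. For probability measures
with `P ≤ K • Q` and `Q ≤ K • P`, testing these inequalities against the nonnegative functions
`1 ± h` gives `|∫ h dP - ∫ h dQ| ≤ K - 1`. It remains to note `c² - 1 ≤ 2c(c - 1)` and, by
convexity of `exp`, `e^{2Lδ} - 1 ≤ δ (e^{2L} - 1)` for `δ ≤ 1`. -/

open scoped ENNReal NNReal

section
variable {α : Type*} [MeasurableSpace α]

theorem integral_le_mul_integral_of_le_smul {μ ν : Measure α} {K : ℝ≥0} (hμν : μ ≤ K • ν)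
    {g : α → ℝ} (hg : ∀ a, 0 ≤ g a) (hgi : Integrable g ν) :
    ∫ a, g a ∂μ ≤ K * ∫ a, g a ∂ν := by
  simpa [NNReal.smul_def] using
    integral_mono_measure hμν (ae_of_all _ hg) hgi.smul_measure_nnreal

theorem one_add_integral_le_of_le_smul {P Q : Measure α} [IsProbabilityMeasure P]
    [IsProbabilityMeasure Q] {K : ℝ≥0} (hPQ : P ≤ K • Q) {h : α → ℝ}
    (hm : Measurable h) (hh : ∀ a, h a ∈ Set.Icc (-1 : ℝ) 1) :
    1 + ∫ a, h a ∂P ≤ K * (1 + ∫ a, h a ∂Q) := by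
  have hint (R : Measure α) [IsFiniteMeasure R] : Integrable h R :=
    .of_bound hm.aestronglyMeasurable 1 (ae_of_all _ fun a => abs_le.2 (hh a))
  have := integral_le_mul_integral_of_le_smul hPQ (g := fun a => 1 + h a)
    (fun a => by linarith [(hh a).1]) ((integrable_const 1).add (hint Q))
  rwa [integral_add (integrable_const 1) (hint P), integral_add (integrable_const 1) (hint Q),
    integral_const, integral_const, probReal_univ, probReal_univ, one_smul] at this

theorem abs_integral_sub_le_of_le_smul {P Q : Measure α} [IsProbabilityMeasure P]
    [IsProbabilityMeasure Q] {K : ℝ≥0} (hPQ : P ≤ K • Q) (hQP : Q ≤ K • P) {h : α → ℝ}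
    (hm : Measurable h) (hh : ∀ a, h a ∈ Set.Icc (-1 : ℝ) 1) :
    |∫ a, h a ∂P - ∫ a, h a ∂Q| ≤ K - 1 := by
  have hneg (a : α) : -h a ∈ Set.Icc (-1 : ℝ) 1 :=
    ⟨by linarith [(hh a).2], by linarith [(hh a).1]⟩
  have h₁ := one_add_integral_le_of_le_smul hPQ hm hh
  have h₂ := one_add_integral_le_of_le_smul hQP hm hh
  have h₃ := one_add_integral_le_of_le_smul hPQ hm.neg hneg
  have h₄ := one_add_integral_le_of_le_smul hQP hm.neg hneg
  simp only [Pi.neg_apply, integral_neg] at h₃ h₄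
  rw [abs_sub_le_iff]
  constructor <;> nlinarith

theorem inv_measure_univ_smul_le_sq_smul {μ ν : Measure α} {c : ℝ≥0} (hμν : μ ≤ c • ν)
    (hνμ : ν ≤ c • μ) : (μ Set.univ)⁻¹ • μ ≤ c ^ 2 • ((ν Set.univ)⁻¹ • ν) := by
  rcases eq_or_ne c 0 with rfl | hc
  · rw [le_antisymm (by simpa using hμν) (Measure.zero_le μ), smul_zero]
    exact Measure.zero_le _
  have hinv : (μ Set.univ)⁻¹ ≤ c * (ν Set.univ)⁻¹ := by
    rw [← div_eq_mul_inv, ← ENNReal.inv_div (by simp) (by simp [hc]), ENNReal.inv_le_inv]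
    exact ENNReal.div_le_of_le_mul' <| (hνμ Set.univ).trans_eq (Measure.coe_nnreal_smul_apply ..)
  intro s
  simp only [Measure.smul_apply, ENNReal.smul_def, smul_eq_mul]
  calc (μ Set.univ)⁻¹ * μ s ≤ (c * (ν Set.univ)⁻¹) * (c * ν s) := by
        gcongr
        exact (hμν s).trans_eq (Measure.coe_nnreal_smul_apply ..)
    _ = _ := by push_cast; ring

theorem inv_measure_univ_smul_eq_zero {μ : Measure α} (h : μ Set.univ = 0 ∨ μ Set.univ = ∞) :
    (μ Set.univ)⁻¹ • μ = 0 := by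
  rcases h with h | h
  · simp [Measure.measure_univ_eq_zero.1 h]
  · simp [h]

theorem abs_integral_inv_measure_univ_smul_sub_le {μ ν : Measure α} {c : ℝ≥0} (hc : 1 ≤ c)
    (hμν : μ ≤ c • ν) (hνμ : ν ≤ c • μ) {h : α → ℝ} (hm : Measurable h)
    (hh : ∀ a, h a ∈ Set.Icc (-1 : ℝ) 1) :
    |∫ a, h a ∂((μ Set.univ)⁻¹ • μ) - ∫ a, h a ∂((ν Set.univ)⁻¹ • ν)| ≤ c ^ 2 - 1 := by
  have hμν' : μ Set.univ ≤ c * ν Set.univ := (hμν _).trans_eq (Measure.coe_nnreal_smul_apply ..)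
  have hνμ' : ν Set.univ ≤ c * μ Set.univ := (hνμ _).trans_eq (Measure.coe_nnreal_smul_apply ..)
  -- The normalizing constants may be `0` or `∞` (the tilted densities need not be integrable);
  -- then both normalized measures are zero.
  by_cases hμ : μ Set.univ = 0 ∨ μ Set.univ = ∞
  · have hν : ν Set.univ = 0 ∨ ν Set.univ = ∞ := by
      rcases hμ with h0 | htop
      · exact .inl (by simpa [h0] using hνμ')
      · refine .inr (by_contra fun hν => ?_)
        exact ENNReal.mul_ne_top ENNReal.coe_ne_top hν (top_le_iff.1 (htop ▸ hμν'))
    rw [inv_measure_univ_smul_eq_zero hμ, inv_measure_univ_smul_eq_zero hν]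
    simpa using hc
  obtain ⟨hμ0, hμtop⟩ := not_or.1 hμ
  have : IsFiniteMeasure μ := ⟨lt_top_iff_ne_top.2 hμtop⟩
  have : NeZero μ := ⟨fun h => hμ0 (by simp [h])⟩
  have : IsFiniteMeasure ν :=
    ⟨hνμ'.trans_lt (ENNReal.mul_lt_top (by simp) (lt_top_iff_ne_top.2 hμtop))⟩
  have : NeZero ν := ⟨fun h => hμ0 (by simpa [h] using hμν')⟩
  simpa using abs_integral_sub_le_of_le_smul (inv_measure_univ_smul_le_sq_smul hμν hνμ)
    (inv_measure_univ_smul_le_sq_smul hνμ hμν) hm hh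

theorem withDensity_ofReal_exp_le_smul {ν : Measure α} {u v : α → ℝ} {a : ℝ}
    (huv : ∀ᵐ x ∂ν, u x ≤ v x + a) :
    ν.withDensity (fun x => ENNReal.ofReal (exp (u x)))
      ≤ (exp a).toNNReal • ν.withDensity (fun x => ENNReal.ofReal (exp (v x))) := by
  rw [← Measure.coe_nnreal_smul, ← withDensity_smul' _ _ ENNReal.coe_ne_top]
  refine withDensity_mono (huv.mono fun x hx => ?_)
  simp only [Pi.smul_apply, smul_eq_mul]
  rw [← ENNReal.ofReal.eq_def, ← ENNReal.ofReal_mul (exp_pos a).le, ← exp_add]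
  exact ENNReal.ofReal_le_ofReal (exp_le_exp.2 (by linarith))

end

theorem exp_mul_sub_one_le_mul {x δ : ℝ} (hδ₀ : 0 ≤ δ) (hδ₁ : δ ≤ 1) :
    exp (x * δ) - 1 ≤ δ * (exp x - 1) := by
  have := convexOn_exp.2 (Set.mem_univ 0) (Set.mem_univ x) (sub_nonneg.2 hδ₁) hδ₀ (by ring)
  simp only [smul_eq_mul, mul_zero, zero_add, exp_zero, mul_one] at this
  rw [mul_comm] at this
  linarith

theorem abs_integral_tiltPrior_sub_le {k : ℕ} {Θs : Set (EuclideanSpace ℝ (Fin k))}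
    {ν : Measure ℝ} {ℓ : EuclideanSpace ℝ (Fin k) → ℝ → ℝ} {L : ℝ} (hL : 0 ≤ L)
    (hν : ν (Set.Icc (-1 : ℝ) 1)ᶜ = 0)
    (hℓ : ∀ b ∈ Set.Icc (-1 : ℝ) 1, ∀ θ ∈ Θs, ∀ θ' ∈ Θs, |ℓ θ b - ℓ θ' b| ≤ L * ‖θ - θ'‖)
    (t d : ℝ) {h : ℝ → ℝ} (hm : Measurable h) (hh : ∀ b, h b ∈ Set.Icc (-1 : ℝ) 1)
    {θ θ' : EuclideanSpace ℝ (Fin k)} (hθ : θ ∈ Θs) (hθ' : θ' ∈ Θs) :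
    |∫ b, h b ∂(tiltPrior ν ℓ t d θ) - ∫ b, h b ∂(tiltPrior ν ℓ t d θ')|
      ≤ exp (L * ‖θ - θ'‖) ^ 2 - 1 := by
  have hIcc : ∀ᵐ b ∂ν, b ∈ Set.Icc (-1 : ℝ) 1 := mem_ae_iff.2 hν
  have hdom {ϑ ϑ'} (hϑ : ϑ ∈ Θs) (hϑ' : ϑ' ∈ Θs) (hδ : ‖ϑ - ϑ'‖ = ‖θ - θ'‖) :=
    withDensity_ofReal_exp_le_smul (ν := ν) (u := fun b => t * b - d * b ^ 2 / 2 + ℓ ϑ b)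
      (v := fun b => t * b - d * b ^ 2 / 2 + ℓ ϑ' b) (a := L * ‖θ - θ'‖) <|
      hIcc.mono fun b hb => by
        have := (abs_le.1 (hℓ b hb ϑ hϑ ϑ' hϑ')).2
        rw [hδ] at this
        linarith
  have hc : 1 ≤ (exp (L * ‖θ - θ'‖)).toNNReal := by
    simpa using one_le_exp (mul_nonneg hL (norm_nonneg _))
  have := abs_integral_inv_measure_univ_smul_sub_le hc
    (hdom hθ hθ' rfl) (hdom hθ' hθ (norm_sub_rev _ _)) hm hh
  rwa [coe_toNNReal _ (exp_pos _).le] at this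

/-- **Stability of tilted expectations in the prior parameter.**
For a nonzero finite measure `ν` on `[−1,1]` and `ℓ` Lipschitz in `θ` (with constant `L`,
uniformly in `b ∈ [−1,1]`), the tilted expectations of any `[−1,1]`-valued measurable `h`
satisfy `|∫ h dμ_{t,θ} − ∫ h dμ_{t,θ'}| ≤ 2 e^{Lδ}(e^{Lδ} − 1)` with `δ = ‖θ − θ'‖`;
in particular the difference is at most `C(L)·‖θ − θ'‖` whenever `‖θ − θ'‖ ≤ 1`,
with `C(L)` depending only on `L`. -/
theorem stmt_10 (L : ℝ) (hL : 0 ≤ L) :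
    ∃ Cl : ℝ, 0 < Cl ∧
      ∀ (k : ℕ) (Θs : Set (EuclideanSpace ℝ (Fin k))) (ν : Measure ℝ),
        IsFiniteMeasure ν → ν ≠ 0 → ν (Set.Icc (-1 : ℝ) 1)ᶜ = 0 →
        ∀ ℓ : EuclideanSpace ℝ (Fin k) → ℝ → ℝ,
        (∀ b ∈ Set.Icc (-1 : ℝ) 1, ∀ θ ∈ Θs, ∀ θ' ∈ Θs, |ℓ θ b - ℓ θ' b| ≤ L * ‖θ - θ'‖) →
        ∀ t d : ℝ, 0 ≤ d →
        ∀ h : ℝ → ℝ, Measurable h → (∀ b : ℝ, h b ∈ Set.Icc (-1 : ℝ) 1) →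
        ∀ θ ∈ Θs, ∀ θ' ∈ Θs,
          (|∫ b, h b ∂(tiltPrior ν ℓ t d θ) - ∫ b, h b ∂(tiltPrior ν ℓ t d θ')|
              ≤ 2 * Real.exp (L * ‖θ - θ'‖) * (Real.exp (L * ‖θ - θ'‖) - 1)) ∧
          (‖θ - θ'‖ ≤ 1 →
            |∫ b, h b ∂(tiltPrior ν ℓ t d θ) - ∫ b, h b ∂(tiltPrior ν ℓ t d θ')|
              ≤ Cl * ‖θ - θ'‖) := by
  refine ⟨exp (2 * L), exp_pos _, fun k Θs ν _ _ hν ℓ hℓ t d _ h hm hh θ hθ θ' hθ' => ?_⟩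
  have key := abs_integral_tiltPrior_sub_le hL hν hℓ t d hm hh hθ hθ'
  have hc : 1 ≤ exp (L * ‖θ - θ'‖) := one_le_exp (mul_nonneg hL (norm_nonneg _))
  refine ⟨key.trans (by nlinarith), fun hδ => key.trans ?_⟩
  calc exp (L * ‖θ - θ'‖) ^ 2 - 1 = exp (2 * L * ‖θ - θ'‖) - 1 := by
        rw [← exp_nat_mul]; ring_nf
    _ ≤ ‖θ - θ'‖ * (exp (2 * L) - 1) := exp_mul_sub_one_le_mul (norm_nonneg _) hδ
    _ ≤ exp (2 * L) * ‖θ - θ'‖ := by nlinarith [norm_nonneg (θ - θ')]
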